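/- Let μ > 0, α ∈ (0,1), and t ∈ ℝ with Φ(t) = 1 − α. Then Φ(t − μ) = sup over ε ∈ [0,∞) of f_{ε, δ_μ(ε)}(α), where δ_μ(ε) = Φ(−ε/μ + μ/2) − e^ε·Φ(−ε/μ − μ/2); that is, the Gaussian trade-off function G_μ(α) = Φ(Φ^{−1}(1 − α) − μ) is the pointwise supremum of the trade-off functions f_{ε,δ_μ(ε)} over all ε ≥ 0. -/

import Mathlib

open MeasureTheory ProbabilityTheory Real

/-- The trade-off function `f_{ε,δ}` for `(ε,δ)`-differential privacy. -/
noncomputable def fDP (ε δ α : ℝ) : ℝ :=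
  max 0 (max (1 - δ - Real.exp ε * α) (Real.exp (-ε) * (1 - δ - α)))

/-- The cumulative distribution function of the standard Gaussian `N(0,1)`. -/
noncomputable def stdGaussCDF (x : ℝ) : ℝ :=
  ProbabilityTheory.cdf (ProbabilityTheory.gaussianReal 0 1) x

/-- The `δ(ε)` curve of `μ`-Gaussian differential privacy. -/
noncomputable def gdpDelta (μ ε : ℝ) : ℝ :=
  stdGaussCDF (-ε / μ + μ / 2) - Real.exp ε * stdGaussCDF (-ε / μ - μ / 2)

/-!
Write `B(ε) = 1 - δ_μ(ε) - e^ε α`. Because `e^{-ε} (1 - δ_μ(ε)) = 1 - δ_μ(-ε)`, the trade-off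
function `f_{ε,δ_μ(ε)}(α)` equals `max(0, B(ε), B(-ε))`, so the supremum over `ε ≥ 0` is the
maximum of `B` over all of `ℝ` (or `0`). The Gaussian likelihood-ratio identity
`φ(a - c) = e^{2ac} φ(a + c)` gives `B'(ε) = e^ε (Φ(-ε/μ - μ/2) - α)`, which changes sign exactly
once, at `ε₀ = μt - μ²/2`; there `B(ε₀) = Φ(t - μ)`.
-/

open Set

lemma gaussianPDFReal_zero_one_neg (x : ℝ) : gaussianPDFReal 0 1 (-x) = gaussianPDFReal 0 1 x := by
  simp [gaussianPDFReal]

lemma gaussianPDFReal_zero_one_sub (a c : ℝ) :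
    gaussianPDFReal 0 1 (a - c) = Real.exp (2 * a * c) * gaussianPDFReal 0 1 (a + c) := by
  simp only [gaussianPDFReal, NNReal.coe_one, mul_one, sub_zero]
  rw [mul_left_comm, ← Real.exp_add]
  ring_nf

lemma continuous_gaussianPDFReal_zero_one : Continuous (gaussianPDFReal 0 1) := by
  unfold gaussianPDFReal
  fun_prop

lemma stdGaussCDF_eq_integral (x : ℝ) :
    stdGaussCDF x = ∫ t in Iic x, gaussianPDFReal 0 1 t := by
  rw [stdGaussCDF, cdf_eq_real, measureReal_def, gaussianReal_apply_eq_integral 0 one_ne_zero,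
    ENNReal.toReal_ofReal (integral_nonneg fun t => gaussianPDFReal_nonneg 0 1 t)]

lemma stdGaussCDF_neg (x : ℝ) : stdGaussCDF (-x) = 1 - stdGaussCDF x := by
  have hreflect : ∫ t in Iic (-x), gaussianPDFReal 0 1 t = ∫ t in Ioi x, gaussianPDFReal 0 1 t := by
    simpa only [gaussianPDFReal_zero_one_neg, neg_neg] using
      integral_comp_neg_Iic (-x) (gaussianPDFReal 0 1)
  have htotal := intervalIntegral.integral_Iic_add_Ioi
    ((integrable_gaussianPDFReal 0 1).integrableOn (s := Iic x))
    ((integrable_gaussianPDFReal 0 1).integrableOn (s := Ioi x))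
  rw [integral_gaussianPDFReal_eq_one 0 one_ne_zero] at htotal
  rw [stdGaussCDF_eq_integral, stdGaussCDF_eq_integral, hreflect]
  linarith

lemma hasDerivAt_stdGaussCDF (x : ℝ) : HasDerivAt stdGaussCDF (gaussianPDFReal 0 1 x) x := by
  have hFTC : stdGaussCDF = fun y => (∫ t in (0 : ℝ)..y, gaussianPDFReal 0 1 t) + stdGaussCDF 0 := by
    funext y
    rw [stdGaussCDF_eq_integral y, ← intervalIntegral.integral_Iic_sub_Iic
      (integrable_gaussianPDFReal 0 1).integrableOn (integrable_gaussianPDFReal 0 1).integrableOn,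
      stdGaussCDF_eq_integral 0]
    ring
  rw [hFTC]
  exact (intervalIntegral.integral_hasDerivAt_right
    (integrable_gaussianPDFReal 0 1).intervalIntegrable
    continuous_gaussianPDFReal_zero_one.stronglyMeasurable.stronglyMeasurableAtFilter
    continuous_gaussianPDFReal_zero_one.continuousAt).add_const _

lemma exp_neg_mul_one_sub_gdpDelta (μ ε : ℝ) :
    Real.exp (-ε) * (1 - gdpDelta μ ε) = 1 - gdpDelta μ (-ε) := by
  have hε : stdGaussCDF (-ε / μ + μ / 2) = 1 - stdGaussCDF (ε / μ - μ / 2) := by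
    rw [← stdGaussCDF_neg]; ring_nf
  have hnegε : stdGaussCDF (- -ε / μ + μ / 2) = 1 - stdGaussCDF (-ε / μ - μ / 2) := by
    rw [← stdGaussCDF_neg]; ring_nf
  rw [gdpDelta, gdpDelta, hε, hnegε, show - -ε / μ - μ / 2 = ε / μ - μ / 2 by ring, Real.exp_neg]
  field_simp
  ring

lemma hasDerivAt_gdpDelta {μ : ℝ} (hμ : μ ≠ 0) (ε : ℝ) :
    HasDerivAt (gdpDelta μ) (-(Real.exp ε * stdGaussCDF (-ε / μ - μ / 2))) ε := by
  have hleft : HasDerivAt (fun e => -e / μ + μ / 2) (-1 / μ) ε := by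
    simpa [neg_div] using ((hasDerivAt_id ε).neg.div_const μ).add_const (μ / 2)
  have hright : HasDerivAt (fun e => -e / μ - μ / 2) (-1 / μ) ε := by
    simpa [neg_div] using ((hasDerivAt_id ε).neg.div_const μ).sub_const (μ / 2)
  -- the two density terms cancel by the likelihood-ratio identity
  have hratio : gaussianPDFReal 0 1 (-ε / μ + μ / 2)
      = Real.exp ε * gaussianPDFReal 0 1 (-ε / μ - μ / 2) := by
    rw [← gaussianPDFReal_zero_one_neg, show -(-ε / μ + μ / 2) = ε / μ - μ / 2 by ring,
      gaussianPDFReal_zero_one_sub, show -ε / μ - μ / 2 = -(ε / μ + μ / 2) by ring,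
      gaussianPDFReal_zero_one_neg, show 2 * (ε / μ) * (μ / 2) = ε by field_simp]
  exact (((hasDerivAt_stdGaussCDF _).comp ε hleft).fun_sub ((Real.hasDerivAt_exp ε).fun_mul
    ((hasDerivAt_stdGaussCDF _).comp ε hright))).congr_deriv
    (by rw [hratio, Function.comp_apply]; ring)

noncomputable def gdpBranch (μ α ε : ℝ) : ℝ :=
  1 - gdpDelta μ ε - Real.exp ε * α

lemma fDP_gdpDelta (μ ε α : ℝ) :
    fDP ε (gdpDelta μ ε) α = max 0 (max (gdpBranch μ α ε) (gdpBranch μ α (-ε))) := by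
  rw [fDP, gdpBranch, gdpBranch, mul_sub, exp_neg_mul_one_sub_gdpDelta]

lemma hasDerivAt_gdpBranch {μ : ℝ} (hμ : μ ≠ 0) (α ε : ℝ) :
    HasDerivAt (gdpBranch μ α)
      (Real.exp ε * (stdGaussCDF (-ε / μ - μ / 2) - α)) ε :=
  (((hasDerivAt_gdpDelta hμ ε).const_sub 1).fun_sub
    ((Real.hasDerivAt_exp ε).mul_const α)).congr_deriv (by ring)

lemma gdpBranch_eq {μ α t : ℝ} (hμ : μ ≠ 0) (ht : stdGaussCDF (-t) = α) :
    gdpBranch μ α (μ * t - μ ^ 2 / 2) = stdGaussCDF (t - μ) := by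
  have hleft : -(μ * t - μ ^ 2 / 2) / μ + μ / 2 = -(t - μ) := by field_simp; ring
  have hright : -(μ * t - μ ^ 2 / 2) / μ - μ / 2 = -t := by field_simp; ring
  rw [gdpBranch, gdpDelta, hleft, hright, stdGaussCDF_neg, ht]
  ring

lemma isMaxOn_gdpBranch {μ α t : ℝ} (hμ : 0 < μ) (ht : stdGaussCDF (-t) = α) :
    IsMaxOn (gdpBranch μ α) univ (μ * t - μ ^ 2 / 2) := by
  have hderiv := hasDerivAt_gdpBranch hμ.ne' α
  have hdiff : Differentiable ℝ (gdpBranch μ α) := fun ε => (hderiv ε).differentiableAt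
  have harg (ε : ℝ) : -ε / μ - μ / 2 = -t + (μ * t - μ ^ 2 / 2 - ε) / μ := by
    field_simp; ring
  refine isMaxOn_univ_of_deriv hdiff.continuous.continuousAt hdiff.differentiableOn
    hdiff.differentiableOn (fun ε hε => ?_) (fun ε hε => ?_) <;> rw [(hderiv ε).deriv]
  · have hpos := div_pos (sub_pos.2 (mem_Iio.1 hε)) hμ
    have hcdf := monotone_cdf (gaussianReal 0 1) (show -t ≤ -ε / μ - μ / 2 by rw [harg]; linarith)
    have hexp := Real.exp_pos ε
    rw [stdGaussCDF] at ht ⊢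
    nlinarith
  · have hneg := div_neg_of_neg_of_pos (sub_neg.2 (mem_Ioi.1 hε)) hμ
    have hcdf := monotone_cdf (gaussianReal 0 1) (show -ε / μ - μ / 2 ≤ -t by rw [harg]; linarith)
    have hexp := Real.exp_pos ε
    rw [stdGaussCDF] at ht ⊢
    nlinarith

theorem stmt_12_general (μ α t : ℝ) (hμ : 0 < μ) (ht : stdGaussCDF t = 1 - α) :
    stdGaussCDF (t - μ) = ⨆ ε : Set.Ici (0 : ℝ), fDP ε (gdpDelta μ ε) α := by
  have hnegt : stdGaussCDF (-t) = α := by rw [stdGaussCDF_neg, ht]; ring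
  set ε₀ := μ * t - μ ^ 2 / 2
  have hmax : IsMaxOn (gdpBranch μ α) univ ε₀ := isMaxOn_gdpBranch hμ hnegt
  have hval : gdpBranch μ α ε₀ = stdGaussCDF (t - μ) := gdpBranch_eq hμ.ne' hnegt
  have hbound (ε : Set.Ici (0 : ℝ)) : fDP ε (gdpDelta μ ε) α ≤ stdGaussCDF (t - μ) := by
    rw [fDP_gdpDelta, ← hval]
    exact max_le (hval ▸ cdf_nonneg _ _) (max_le (hmax (mem_univ _)) (hmax (mem_univ _)))
  have hattained : stdGaussCDF (t - μ) ≤ fDP |ε₀| (gdpDelta μ |ε₀|) α := by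
    rw [fDP_gdpDelta, ← hval]
    refine le_max_of_le_right ?_
    rcases abs_choice ε₀ with h | h
    · rw [h]; exact le_max_left _ _
    · rw [h, neg_neg]; exact le_max_right _ _
  exact le_antisymm
    (le_ciSup_of_le ⟨_, forall_mem_range.2 hbound⟩ ⟨|ε₀|, mem_Ici.2 (abs_nonneg _)⟩ hattained)
    (ciSup_le hbound)

theorem stmt_12 (μ α t : ℝ) (hμ : 0 < μ) (hα : α ∈ Set.Ioo (0 : ℝ) 1)
    (ht : stdGaussCDF t = 1 - α) :
    stdGaussCDF (t - μ) = ⨆ ε : Set.Ici (0 : ℝ), fDP ε (gdpDelta μ ε) α :=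
  stmt_12_general μ α t hμ ht
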